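/- A finitely generated module over C[z, z^{-1}] (Laurent polynomials in one variable over C) which admits a connection (i.e. a C-linear map D : M → M satisfying D(fm) = f'·m + f·D(m) where f' denotes z·df/dz, or any derivation-compatible map) is projective, hence free. -/

import Mathlib

open LaurentPolynomial Polynomial

noncomputable section AuxConn

namespace ProjFreeConnAux

local notation "R" => LaurentPolynomial ℂ

lemma powX_le : Submonoid.powers (Polynomial.X : ℂ[X]) ≤ nonZeroDivisors ℂ[X] :=
  powers_le_nonZeroDivisors_of_noZeroDivisors Polynomial.X_ne_zero

instance : IsDomain R :=
  have := (@LaurentPolynomial.isLocalization ℂ _)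
  IsLocalization.isDomain_of_le_nonZeroDivisors _ powX_le

instance : IsNoetherianRing R :=
  have := (@LaurentPolynomial.isLocalization ℂ _)
  IsLocalization.isNoetherianRing (Submonoid.powers (Polynomial.X : ℂ[X])) R inferInstance

instance : IsPrincipalIdealRing R := by
  have := (@LaurentPolynomial.isLocalization ℂ _)
  constructor
  intro J
  rw [← IsLocalization.map_comap (Submonoid.powers (Polynomial.X : ℂ[X])) R J]
  obtain ⟨g, hg⟩ := (IsPrincipalIdealRing.principal (Ideal.under ℂ[X] J))
  rw [hg]
  exact ⟨algebraMap ℂ[X] R g, by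
    rw [show Submodule.span ℂ[X] {g} = Ideal.span {g} from rfl, Ideal.map_span,
      Set.image_singleton]⟩

/-- `ℂ[z,z⁻¹] ⧸ ((z-a)^N)` is finite dimensional over `ℂ` for `a ≠ 0`. -/
lemma finite_quot (a : ℂ) (ha : a ≠ 0) (N : ℕ) :
    Module.Finite ℂ (R ⧸ Ideal.span {((T 1 - LaurentPolynomial.C a) ^ N : R)}) := by
  set za : R := T 1 - LaurentPolynomial.C a with hza
  set I : Ideal R := Ideal.span {(za ^ N : R)} with hI
  set q : ℂ[X] := (Polynomial.X - Polynomial.C a) ^ N with hq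
  have hTLq : toLaurent q = za ^ N := by
    rw [hq, map_pow, map_sub, Polynomial.toLaurent_X, Polynomial.toLaurent_C]
  set φ : ℂ[X] →ₐ[ℂ] R ⧸ I := (Ideal.Quotient.mkₐ ℂ I).comp toLaurentAlg with hφ
  have hφ_apply : ∀ p : ℂ[X], φ p = Ideal.Quotient.mk I (toLaurent p) := fun p => rfl
  have hφq : φ q = 0 := by
    rw [hφ_apply, hTLq, Ideal.Quotient.eq_zero_iff_mem]
    exact Ideal.mem_span_singleton_self _
  -- coprimality of X and q
  have hcop : IsCoprime (Polynomial.X : ℂ[X]) q := by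
    refine IsCoprime.pow_right ?_
    refine ⟨Polynomial.C a⁻¹, -Polynomial.C a⁻¹, ?_⟩
    have : Polynomial.C a⁻¹ * Polynomial.X + -Polynomial.C a⁻¹ * (Polynomial.X - Polynomial.C a)
        = Polynomial.C a⁻¹ * Polynomial.C a := by ring
    rw [this, ← Polynomial.C_mul, inv_mul_cancel₀ ha, Polynomial.C_1]
  obtain ⟨u, v, huv⟩ := hcop
  -- mk (T (-1)) = mk (toLaurent u)
  have hu1 : Ideal.Quotient.mk I (toLaurent u * T 1) = 1 := by
    have h2 : toLaurent u * T 1 = 1 - toLaurent v * za ^ N := by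
      have := congrArg toLaurent huv
      simp only [map_add, map_mul, Polynomial.toLaurent_X, map_one, hTLq] at this
      linear_combination this
    rw [h2, map_sub, map_one, map_mul]
    have : Ideal.Quotient.mk I (za ^ N) = 0 := by
      rw [Ideal.Quotient.eq_zero_iff_mem]; exact Ideal.mem_span_singleton_self _
    rw [this, mul_zero, sub_zero]
  have hTu : Ideal.Quotient.mk I (T (-1 : ℤ)) = Ideal.Quotient.mk I (toLaurent u) := by
    have h3 : (T (-1 : ℤ) : R) * (toLaurent u * T 1) = toLaurent u := by
      rw [mul_comm (toLaurent u) (T 1), ← mul_assoc, ← T_add]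
      norm_num [T_zero]
    calc Ideal.Quotient.mk I (T (-1 : ℤ))
        = Ideal.Quotient.mk I (T (-1 : ℤ)) * Ideal.Quotient.mk I (toLaurent u * T 1) := by
          rw [hu1, mul_one]
      _ = Ideal.Quotient.mk I (toLaurent u) := by rw [← map_mul, h3]
  have hφsurj : Function.Surjective φ := by
    intro x
    obtain ⟨f, rfl⟩ := Ideal.Quotient.mk_surjective x
    obtain ⟨n, p, hp⟩ := f.exists_T_pow
    refine ⟨p * u ^ n, ?_⟩
    have hf : f = toLaurent p * T (-(n : ℤ)) := by
      have : f * T n * T (-(n : ℤ)) = f := by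
        rw [mul_assoc, ← T_add]
        norm_num [T_zero]
      rw [← this, hp]
    have hun : Ideal.Quotient.mk I (toLaurent u ^ n) = Ideal.Quotient.mk I (T (-(n : ℤ))) := by
      rw [map_pow, hTu.symm, ← map_pow, T_pow]
      norm_num
    calc φ (p * u ^ n) = Ideal.Quotient.mk I (toLaurent p) * Ideal.Quotient.mk I (toLaurent u ^ n) := by
          rw [hφ_apply, map_mul, map_mul, map_pow]
      _ = Ideal.Quotient.mk I (toLaurent p) * Ideal.Quotient.mk I (T (-(n : ℤ))) := by rw [hun]
      _ = Ideal.Quotient.mk I f := by rw [← map_mul, ← hf]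
  -- ψ from the finite-dimensional polynomial quotient
  have hker : ∀ x ∈ Ideal.span {q}, φ x = 0 := by
    intro x hx
    obtain ⟨c, rfl⟩ := Ideal.mem_span_singleton.mp hx
    rw [map_mul, hφq, zero_mul]
  set ψ : (ℂ[X] ⧸ Ideal.span {q}) →ₐ[ℂ] R ⧸ I := Ideal.Quotient.liftₐ _ φ hker with hψ
  have hψsurj : Function.Surjective ψ := by
    intro x
    obtain ⟨y, hy⟩ := hφsurj x
    exact ⟨Ideal.Quotient.mk _ y, hy⟩
  haveI : Module.Finite ℂ (ℂ[X] ⧸ Ideal.span {q}) := by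
    have hq0 : q ≠ 0 := pow_ne_zero _ (Polynomial.X_sub_C_ne_zero a)
    exact (AdjoinRoot.powerBasis hq0).finite
  exact Module.Finite.of_surjective ψ.toLinearMap hψsurj


variable {M : Type} [AddCommGroup M] [Module R M] [Module ℂ M] [IsScalarTower ℂ R M]

/-- From a torsion element, produce a nonzero element killed by `z - a` with `a ≠ 0`. -/
lemma exists_linear_torsion (m : M) (hm : m ≠ 0) :
    ∀ (k : ℕ) (p : ℂ[X]), p.natDegree ≤ k → p ≠ 0 → toLaurent p • m = 0 →
      ∃ a : ℂ, a ≠ 0 ∧ ∃ m' : M, m' ≠ 0 ∧ (T 1 - LaurentPolynomial.C a) • m' = 0 := by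
  intro k
  induction k with
  | zero =>
    intro p hdeg hp0 hpm
    exfalso
    have h0 : p = Polynomial.C (p.coeff 0) :=
      Polynomial.eq_C_of_natDegree_eq_zero (Nat.le_zero.mp hdeg)
    have hc0 : p.coeff 0 ≠ 0 := fun h => hp0 (by rw [h0, h, map_zero])
    rw [h0, Polynomial.toLaurent_C, LaurentPolynomial.C_eq_algebraMap, algebraMap_smul] at hpm
    exact hm (by simpa [inv_smul_smul₀ hc0] using congrArg (fun y => (p.coeff 0)⁻¹ • y) hpm)
  | succ k ih =>
    intro p hdeg hp0 hpm
    by_cases hd0 : p.natDegree = 0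
    · exact ih p (by omega) hp0 hpm
    · have hdegpos : 0 < p.degree := Polynomial.natDegree_pos_iff_degree_pos.mp (Nat.pos_of_ne_zero hd0)
      obtain ⟨a, ha⟩ := Complex.exists_root hdegpos
      obtain ⟨q, hq⟩ := (Polynomial.dvd_iff_isRoot.mpr ha)
      have hq0 : q ≠ 0 := fun h => hp0 (by rw [hq, h, mul_zero])
      have hqdeg : q.natDegree ≤ k := by
        have := Polynomial.natDegree_mul (Polynomial.X_sub_C_ne_zero a) hq0
        rw [← hq, Polynomial.natDegree_X_sub_C] at this
        omega
      by_cases haz : a = 0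
      · -- p = X * q, strip the unit X
        have hqm : toLaurent q • m = 0 := by
          have h1 : toLaurent p • m = (T 1 : R) • toLaurent q • m := by
            rw [hq, haz, map_mul, map_sub, Polynomial.toLaurent_X, Polynomial.toLaurent_C,
              map_zero, sub_zero, mul_smul]
          have h2 : (T (-1 : ℤ) : R) • (T (1 : ℤ) : R) • toLaurent q • m = toLaurent q • m := by
            rw [← mul_smul, ← T_add]
            norm_num [T_zero, one_smul]
          rw [← h2, ← h1, hpm, smul_zero]
        exact ih q hqdeg hq0 hqm
      · set m' := toLaurent q • m with hm'
        by_cases hmz : m' = 0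
        · exact ih q hqdeg hq0 hmz
        · refine ⟨a, haz, m', hmz, ?_⟩
          have : ((T 1 - LaurentPolynomial.C a) : R) = toLaurent (Polynomial.X - Polynomial.C a) := by
            rw [map_sub, Polynomial.toLaurent_X, Polynomial.toLaurent_C]
          rw [this, hm', ← mul_smul, ← map_mul, ← hq, hpm]


lemma finite_torsionBy [IsNoetherianRing R] [Module.Finite R M] (a : ℂ) (ha : a ≠ 0) (N : ℕ) :
    Module.Finite ℂ ↥(Submodule.torsionBy R M ((T 1 - LaurentPolynomial.C a) ^ N)) := by
  set za : R := T 1 - LaurentPolynomial.C a with hza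
  set V := Submodule.torsionBy R M (za ^ N) with hV
  haveI : IsNoetherian R M := isNoetherian_of_isNoetherianRing_of_finite R M
  haveI hfinV : Module.Finite R ↥V := Module.Finite.iff_fg.mpr (IsNoetherian.noetherian V)
  have hTor : Module.IsTorsionBy R ↥V (za ^ N) := Submodule.torsionBy_isTorsionBy _
  have hTS : Module.IsTorsionBySet R ↥V ((Ideal.span {za ^ N} : Ideal R) : Set R) := by
    intro x r
    obtain ⟨c, hc⟩ := Ideal.mem_span_singleton'.mp r.2
    have h : (r : R) • x = c • za ^ N • x := by rw [← mul_smul, hc]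
    rw [h, hTor, smul_zero]
  letI : Module (R ⧸ Ideal.span {za ^ N}) ↥V := hTS.module
  haveI := hTS.isScalarTower (S := ℂ)
  haveI := hTS.isScalarTower (S := R)
  haveI : Module.Finite (R ⧸ Ideal.span {za ^ N}) ↥V :=
    Module.Finite.of_restrictScalars_finite R _ _
  haveI : Module.Finite ℂ (R ⧸ Ideal.span {za ^ N}) := finite_quot a ha N
  exact Module.Finite.trans (R ⧸ Ideal.span {za ^ N}) ↥V

set_option maxHeartbeats 1000000 in
lemma no_lin_torsion (a : ℂ) (ha : a ≠ 0)
    [Module.Finite R M]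
    (der : Derivation ℂ R R)
    (hder : ∀ n : ℤ, der (T n) = n • T n)
    (D : M →ₗ[ℂ] M)
    (hD : ∀ (f : R) (m : M), D (f • m) = (der f) • m + f • D m)
    (m : M) (hm : m ≠ 0) (hlin : (T 1 - LaurentPolynomial.C a) • m = 0) : False := by
  set za : R := T 1 - LaurentPolynomial.C a with hza
  have hderza : der za = T 1 := by
    rw [hza, map_sub, LaurentPolynomial.C_eq_algebraMap, Derivation.map_algebraMap, sub_zero,
      hder 1, one_smul]
  haveI : IsNoetherian R M := isNoetherian_of_isNoetherianRing_of_finite R M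
  -- the stabilizing chain of torsion submodules
  have hKmono : Monotone (fun k => Submodule.torsionBy R M (za ^ k)) := by
    intro i j hij x hx
    rw [Submodule.mem_torsionBy_iff] at hx ⊢
    calc za ^ j • x = (za ^ (j - i) * za ^ i) • x := by rw [← pow_add, Nat.sub_add_cancel hij]
      _ = za ^ (j - i) • za ^ i • x := mul_smul _ _ _
      _ = 0 := by rw [hx, smul_zero]
  obtain ⟨n0, hn0⟩ := monotone_stabilizes_iff_noetherian.mpr ‹IsNoetherian R M›
    ⟨fun k => Submodule.torsionBy R M (za ^ k), hKmono⟩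
  set N := n0 + 1 with hN
  set V := Submodule.torsionBy R M (za ^ N) with hV
  have hstab : Submodule.torsionBy R M (za ^ (N + 1)) = V :=
    ((hn0 N (by omega)).symm.trans (hn0 (N + 1) (by omega))).symm
  have hmV : m ∈ V := by
    rw [Submodule.mem_torsionBy_iff, hN, pow_succ, mul_smul, hlin, smul_zero]
  -- D preserves V
  have hDV : ∀ v ∈ V, D v ∈ V := by
    intro v hv
    rw [hV, Submodule.mem_torsionBy_iff] at hv
    rw [← hstab, Submodule.mem_torsionBy_iff]
    have h1 := hD (za ^ (N + 1)) v
    have h2 : za ^ (N + 1) • v = 0 := by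
      rw [pow_succ', mul_smul, hv, smul_zero]
    have h3 : der (za ^ (N + 1)) • v = 0 := by
      rw [Derivation.leibniz_pow, Nat.add_sub_cancel, hderza]
      have hmul : (za ^ N • (T 1 : R)) = T 1 * za ^ N := by
        rw [smul_eq_mul, mul_comm]
      rw [hmul, smul_assoc, mul_smul, hv, smul_zero, smul_zero]
    rw [h2, map_zero, h3, zero_add] at h1
    exact h1.symm
  -- V is finite dimensional over ℂ
  haveI : FiniteDimensional ℂ ↥V := finite_torsionBy a ha N
  -- the two endomorphisms
  set DV : ↥V →ₗ[ℂ] ↥V :=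
    { toFun := fun x => ⟨D x, hDV x x.2⟩
      map_add' := fun x y => Subtype.ext (D.map_add (x : M) (y : M))
      map_smul' := fun c x => Subtype.ext (D.map_smul c (x : M)) } with hDVdef
  set ZV : ↥V →ₗ[ℂ] ↥V :=
    { toFun := fun x => ⟨(T 1 : R) • (x : M), V.smul_mem _ x.2⟩
      map_add' := fun x y => Subtype.ext (smul_add (T 1 : R) (x : M) (y : M))
      map_smul' := fun c x => Subtype.ext (smul_comm (T 1 : R) c (x : M)) } with hZVdef
  have hrel : DV * ZV - ZV * DV = ZV := by
    apply LinearMap.ext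
    intro x
    apply Subtype.ext
    have : ((DV * ZV - ZV * DV) x : M) = D ((T 1 : R) • (x : M)) - (T 1 : R) • D (x : M) := rfl
    rw [this, hD, hder 1, one_smul]
    show (T 1 : R) • (x : M) + (T 1 : R) • D (x : M) - (T 1 : R) • D (x : M)
      = ((ZV x : ↥V) : M)
    rw [add_sub_cancel_right]
    rfl
  have h0 : LinearMap.trace ℂ ↥V ZV = 0 := by
    calc LinearMap.trace ℂ ↥V ZV
        = LinearMap.trace ℂ ↥V (DV * ZV - ZV * DV) := by rw [hrel]
      _ = LinearMap.trace ℂ ↥V (DV * ZV) - LinearMap.trace ℂ ↥V (ZV * DV) :=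
          (LinearMap.trace ℂ ↥V).map_sub (DV * ZV) (ZV * DV)
      _ = 0 := by rw [LinearMap.trace_mul_comm, sub_self]
  set NZ : Module.End ℂ ↥V := ZV - algebraMap ℂ (Module.End ℂ ↥V) a with hNZdef
  have hNZpow : ∀ (k : ℕ) (x : ↥V), (((NZ ^ k) x : ↥V) : M) = za ^ k • (x : M) := by
    intro k
    induction k with
    | zero => intro x; simp
    | succ k ih =>
      intro x
      have hx : ((NZ x : ↥V) : M) = za • (x : M) := by
        have h1 : ((NZ x : ↥V) : M) = (T 1 : R) • (x : M) - a • (x : M) := rfl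
        rw [h1, ← algebraMap_smul R a (x : M), ← LaurentPolynomial.C_eq_algebraMap, ← sub_smul]
      rw [pow_succ, Module.End.mul_apply, ih (NZ x), hx, ← mul_smul, ← pow_succ]
  have hNZnil : IsNilpotent NZ := by
    refine ⟨N, ?_⟩
    apply LinearMap.ext
    intro x
    apply Subtype.ext
    rw [hNZpow N x]
    have : (x : M) ∈ V := x.2
    rw [Submodule.mem_torsionBy_iff] at this
    rw [this]
    rfl
  have htrNZ : LinearMap.trace ℂ ↥V NZ = 0 :=
    (LinearMap.isNilpotent_trace_of_isNilpotent hNZnil).eq_zero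
  have hZNZ : ZV = NZ + algebraMap ℂ (Module.End ℂ ↥V) a := by rw [hNZdef]; abel
  have hfr : (Module.finrank ℂ ↥V : ℂ) = 0 := by
    have h2 : LinearMap.trace ℂ ↥V ZV = a * (Module.finrank ℂ ↥V : ℂ) := by
      rw [hZNZ, map_add, htrNZ, zero_add, Algebra.algebraMap_eq_smul_one, map_smul,
        LinearMap.trace_one, smul_eq_mul]
    rw [h0] at h2
    rcases mul_eq_zero.mp h2.symm with h | h
    · exact absurd h ha
    · exact h
  have hsub : Subsingleton ↥V := by
    rw [Nat.cast_eq_zero] at hfr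
    exact Module.finrank_zero_iff.mp hfr
  exact hm (by simpa using congrArg Subtype.val (Subsingleton.elim (⟨m, hmV⟩ : ↥V) 0))


lemma no_torsion [Module.Finite R M]
    (der : Derivation ℂ R R)
    (hder : ∀ n : ℤ, der (T n) = n • T n)
    (D : M →ₗ[ℂ] M)
    (hD : ∀ (f : R) (m : M), D (f • m) = (der f) • m + f • D m) :
    NoZeroSMulDivisors R M := by
  refine ⟨fun {c x} hcx => ?_⟩
  by_contra hcon
  push_neg at hcon
  obtain ⟨hc, hx⟩ := hcon
  obtain ⟨n, p, hp⟩ := LaurentPolynomial.exists_T_pow c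
  have hpm : toLaurent p • x = 0 := by
    rw [hp, mul_comm, mul_smul, hcx, smul_zero]
  have hp0 : p ≠ 0 := by
    intro h0
    rw [h0, map_zero] at hp
    rcases mul_eq_zero.mp hp.symm with h | h
    · exact hc h
    · exact (isUnit_T n).ne_zero h
  obtain ⟨a, ha, m, hm, hlin⟩ := exists_linear_torsion x hx p.natDegree p le_rfl hp0 hpm
  exact no_lin_torsion a ha der hder D hD m hm hlin

end ProjFreeConnAux

end AuxConn

/-- A finitely generated module over `ℂ[z, z⁻¹]` admitting a connection relative to the
derivation `z·d/dz` is projective, hence free. -/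
theorem projective_free_of_connection
    (M : Type) [AddCommGroup M] [Module (LaurentPolynomial ℂ) M]
    [Module.Finite (LaurentPolynomial ℂ) M]
    [Module ℂ M] [IsScalarTower ℂ (LaurentPolynomial ℂ) M]
    (der : Derivation ℂ (LaurentPolynomial ℂ) (LaurentPolynomial ℂ))
    (hder : ∀ n : ℤ, der (T n) = n • T n)
    (D : M →ₗ[ℂ] M)
    (hD : ∀ (f : LaurentPolynomial ℂ) (m : M), D (f • m) = (der f) • m + f • D m) :
    Module.Projective (LaurentPolynomial ℂ) M ∧ Module.Free (LaurentPolynomial ℂ) M := by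
  haveI : NoZeroSMulDivisors (LaurentPolynomial ℂ) M :=
    ProjFreeConnAux.no_torsion der hder D hD
  haveI : Module.Free (LaurentPolynomial ℂ) M := Module.free_of_finite_type_torsion_free'
  exact ⟨Module.Projective.of_free, inferInstance⟩
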